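/- Let L and Δ be n×n real symmetric matrices. Let λ₁ ≤ … ≤ λ_n be the eigenvalues of L with corresponding orthonormal eigenvectors u₁,…,u_n, and let μ₁ ≤ … ≤ μ_n be the eigenvalues of L + Δ, all counted with multiplicity. Fix 1 ≤ τ ≤ n and a real constant c. If xᵀΔx ≤ c·‖x‖² for every x in span{u₁,…,u_τ}, then μ_k ≤ λ_k + c for every k ≤ τ. -/

import Mathlib

open Matrix
open scoped RealInnerProductSpace

/-!
Courant–Fischer, upper half: if `M` has an orthonormal eigenbasis `v` with nondecreasing
eigenvalues `μ`, then `μ_k` is at most the maximal Rayleigh quotient of `M` on any subspace `W` of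
dimension `k + 1`, because `W` meets the `(n - k)`-dimensional span of `v_k, …, v_{n-1}`, on which
the Rayleigh quotient is at least `μ_k`. Take `W = span {u_0, …, u_k}`: there the Rayleigh
quotient of `L` is at most `λ_k` and that of `Δ` at most `c`.
-/

theorem Submodule.not_disjoint_of_finrank_lt_add {K V : Type*} [DivisionRing K] [AddCommGroup V]
    [Module K V] [FiniteDimensional K V] {s t : Submodule K V}
    (h : Module.finrank K V < Module.finrank K s + Module.finrank K t) : ¬Disjoint s t :=
  fun hst => (Submodule.finrank_add_finrank_le_of_disjoint hst).not_gt h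

theorem LinearIndependent.finrank_span_image_finset {ι R M : Type*} [Ring R]
    [StrongRankCondition R] [AddCommGroup M] [Module R M] {u : ι → M}
    (hu : LinearIndependent R u) (s : Finset ι) :
    Module.finrank R (Submodule.span R (u '' s)) = s.card := by
  have := nontrivial_of_invariantBasisNumber R
  rw [Set.image_eq_range]
  exact (finrank_span_eq_card (hu.comp _ Subtype.val_injective)).trans (Fintype.card_coe s)

section Rayleigh

variable {ι E : Type*} [NormedAddCommGroup E] [InnerProductSpace ℝ E] {u : ι → E}
  {T : E →ₗ[ℝ] E} {a : ι → ℝ}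

theorem Orthonormal.inner_sum_smul_map_sum_smul (hu : Orthonormal ℝ u)
    (hT : ∀ i, T (u i) = a i • u i) (t : Finset ι) (f : ι → ℝ) :
    ⟪∑ i ∈ t, f i • u i, T (∑ i ∈ t, f i • u i)⟫ = ∑ i ∈ t, a i * f i ^ 2 := by
  have hTsum : T (∑ i ∈ t, f i • u i) = ∑ i ∈ t, (a i * f i) • u i := by
    simp only [map_sum, map_smul, hT, smul_smul, mul_comm]
  rw [hTsum, hu.inner_sum]
  exact Finset.sum_congr rfl fun i _ => by simp only [conj_trivial]; ring

theorem Orthonormal.inner_map_self_le_of_mem_span (hu : Orthonormal ℝ u)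
    (hT : ∀ i, T (u i) = a i • u i) {s : Set ι} {b : ℝ} (hab : ∀ i ∈ s, a i ≤ b) {x : E}
    (hx : x ∈ Submodule.span ℝ (u '' s)) : ⟪x, T x⟫ ≤ b * ‖x‖ ^ 2 := by
  obtain ⟨l, hl, rfl⟩ := (Finsupp.mem_span_image_iff_linearCombination ℝ).1 hx
  have hnorm := hu.inner_sum_smul_map_sum_smul (T := LinearMap.id) (a := 1)
    (fun i => (one_smul ℝ (u i)).symm) l.support l
  rw [LinearMap.id_apply, real_inner_self_eq_norm_sq] at hnorm
  rw [Finsupp.linearCombination_apply, Finsupp.sum, hu.inner_sum_smul_map_sum_smul hT, hnorm,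
    Finset.mul_sum]
  exact Finset.sum_le_sum fun i hi => by
    simpa using mul_le_mul_of_nonneg_right (hab i (hl hi)) (sq_nonneg (l i))

theorem Orthonormal.le_inner_map_self_of_mem_span (hu : Orthonormal ℝ u)
    (hT : ∀ i, T (u i) = a i • u i) {s : Set ι} {b : ℝ} (hab : ∀ i ∈ s, b ≤ a i) {x : E}
    (hx : x ∈ Submodule.span ℝ (u '' s)) : b * ‖x‖ ^ 2 ≤ ⟪x, T x⟫ := by
  have hneg := hu.inner_map_self_le_of_mem_span (T := -T) (a := -a)
    (fun i => by simp [hT]) (fun i hi => neg_le_neg (hab i hi)) hx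
  simp only [LinearMap.neg_apply, inner_neg_right, neg_mul] at hneg
  linarith

end Rayleigh

theorem Orthonormal.eigenvalue_le_of_forall_inner_map_self_le {E : Type*} [NormedAddCommGroup E]
    [InnerProductSpace ℝ E] [FiniteDimensional ℝ E] {n : ℕ} (hE : Module.finrank ℝ E ≤ n)
    {v : Fin n → E} (hv : Orthonormal ℝ v) {M : E →ₗ[ℝ] E} {μ : Fin n → ℝ} (hμ : Monotone μ)
    (hM : ∀ i, M (v i) = μ i • v i) (k : Fin n) {W : Submodule ℝ E}
    (hW : (k : ℕ) + 1 ≤ Module.finrank ℝ W) {β : ℝ} (hβ : ∀ x ∈ W, ⟪x, M x⟫ ≤ β * ‖x‖ ^ 2) :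
    μ k ≤ β := by
  set V := Submodule.span ℝ (v '' (Finset.Ici k : Finset (Fin n)))
  have hV : Module.finrank ℝ V = n - k := by
    rw [hv.linearIndependent.finrank_span_image_finset, Fin.card_Ici]
  have hWV : ¬Disjoint W V := Submodule.not_disjoint_of_finrank_lt_add (by omega)
  obtain ⟨x, hxW, hxV, hx0⟩ : ∃ x ∈ W, x ∈ V ∧ x ≠ 0 := by
    simpa [Submodule.disjoint_def] using hWV
  have hlow : μ k * ‖x‖ ^ 2 ≤ ⟪x, M x⟫ :=
    hv.le_inner_map_self_of_mem_span hM (fun i hi => hμ (Finset.mem_Ici.1 hi)) hxV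
  exact le_of_mul_le_mul_right (hlow.trans (hβ x hxW)) (by positivity)

theorem stmt4_general (n τ : ℕ)
    (L Δ : Matrix (Fin n) (Fin n) ℝ)
    (lam mu : Fin n → ℝ) (hlam : Monotone lam) (hmu : Monotone mu)
    (u : Fin n → EuclideanSpace ℝ (Fin n)) (hu : Orthonormal ℝ u)
    (hLu : ∀ i, Matrix.toEuclideanLin L (u i) = lam i • u i)
    (v : Fin n → EuclideanSpace ℝ (Fin n)) (hv : Orthonormal ℝ v)
    (hMv : ∀ i, Matrix.toEuclideanLin (L + Δ) (v i) = mu i • v i)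
    (c : ℝ)
    (hquad : ∀ x ∈ Submodule.span ℝ (u '' {i : Fin n | (i : ℕ) < τ}),
      ⟪x, Matrix.toEuclideanLin Δ x⟫ ≤ c * ‖x‖ ^ 2) :
    ∀ k : Fin n, (k : ℕ) < τ → mu k ≤ lam k + c := by
  intro k hk
  set W := Submodule.span ℝ (u '' (Finset.Iic k : Finset (Fin n)))
  have hW : Module.finrank ℝ W = k + 1 := by
    rw [hu.linearIndependent.finrank_span_image_finset, Fin.card_Iic]
  refine hv.eigenvalue_le_of_forall_inner_map_self_le finrank_euclideanSpace_fin.le hmu hMv k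
    hW.ge fun x hx => ?_
  have hxτ : x ∈ Submodule.span ℝ (u '' {i : Fin n | (i : ℕ) < τ}) :=
    Submodule.span_mono (Set.image_mono fun i hi =>
      (Fin.le_iff_val_le_val.1 (Finset.mem_Iic.1 hi)).trans_lt hk) hx
  calc ⟪x, Matrix.toEuclideanLin (L + Δ) x⟫
      = ⟪x, Matrix.toEuclideanLin L x⟫ + ⟪x, Matrix.toEuclideanLin Δ x⟫ := by
        rw [map_add, LinearMap.add_apply, inner_add_right]
    _ ≤ lam k * ‖x‖ ^ 2 + c * ‖x‖ ^ 2 :=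
        add_le_add (hu.inner_map_self_le_of_mem_span hLu
          (fun i hi => hlam (Finset.mem_Iic.1 hi)) hx) (hquad x hxτ)
    _ = (lam k + c) * ‖x‖ ^ 2 := by ring

/-- (Low-pass band stability, Courant–Fischer.) Let `L, Δ` be real symmetric
`n×n` matrices, with eigenvalues `λ₁ ≤ … ≤ λ_n` of `L` (orthonormal eigenvectors `u₁,…,u_n`) and
`μ₁ ≤ … ≤ μ_n` of `L + Δ`, all with multiplicity. If `xᵀΔx ≤ c‖x‖²` for every `x` in the span of
the first `τ` eigenvectors of `L`, then `μ_k ≤ λ_k + c` for every `k ≤ τ`. -/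
theorem stmt4 (n τ : ℕ) (hτ1 : 1 ≤ τ) (hτn : τ ≤ n)
    (L Δ : Matrix (Fin n) (Fin n) ℝ) (hL : L.IsSymm) (hΔ : Δ.IsSymm)
    (lam mu : Fin n → ℝ) (hlam : Monotone lam) (hmu : Monotone mu)
    (u : Fin n → EuclideanSpace ℝ (Fin n)) (hu : Orthonormal ℝ u)
    (hLu : ∀ i, Matrix.toEuclideanLin L (u i) = lam i • u i)
    (v : Fin n → EuclideanSpace ℝ (Fin n)) (hv : Orthonormal ℝ v)
    (hMv : ∀ i, Matrix.toEuclideanLin (L + Δ) (v i) = mu i • v i)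
    (c : ℝ)
    (hquad : ∀ x ∈ Submodule.span ℝ (u '' {i : Fin n | (i : ℕ) < τ}),
      ⟪x, Matrix.toEuclideanLin Δ x⟫ ≤ c * ‖x‖ ^ 2) :
    ∀ k : Fin n, (k : ℕ) < τ → mu k ≤ lam k + c :=
  stmt4_general n τ L Δ lam mu hlam hmu u hu hLu v hv hMv c hquad
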